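/- arXiv:2106.03440 — 2 statements merged into one kernel-verified Lean document; each statement's English description precedes it below -/
import Mathlib

section
/- For each n ≥ 1, letting h_a^b denote the complete homogeneous symmetric polynomial of degree a in the variables x_1,...,x_b, the ideal ⟨h_1^n, h_2^n, ..., h_n^n⟩ in Z[x_1,...,x_n] equals the ideal ⟨h_1^n, h_2^{n-1}, h_3^{n-1}, ..., h_n^{n-1}⟩. -/
/-!
Splitting off the monomials that contain `x_n` gives `h_{a+1}^n = h_{a+1}^{n-1} + x_n h_a^n`.
Hence each `h_a^{n-1}` with `a ≥ 2` lies in the first ideal, and conversely, by induction on `a`,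
each `h_a^n` lies in the second one.
-/

/-- `h_a^b`: the sum of all monomials of degree `a` in the first `b` variables
`x_1, …, x_b` of `ℤ[x_1, …, x_n]`. -/
noncomputable def Hp (n a b : ℕ) : MvPolynomial (Fin n) ℤ :=
  ∑ m ∈ (Finset.univ.filter fun i : Fin n => (i : ℕ) < b).sym a,
    ((m : Multiset (Fin n)).map MvPolynomial.X).prod

namespace Finset

variable {α : Type*} [DecidableEq α]

theorem sym_succ_insert (a : α) (s : Finset α) (k : ℕ) :
    (insert a s).sym (k + 1) = s.sym (k + 1) ∪ ((insert a s).sym k).image (Sym.cons a) := by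
  ext m
  simp only [mem_union, mem_image, mem_sym_iff, mem_insert]
  constructor
  · intro h
    by_cases ham : a ∈ m
    · refine .inr ⟨m.erase a ham, fun b hb => h b ?_, Sym.cons_erase ham⟩
      exact Multiset.mem_of_mem_erase (s := (m : Multiset α)) hb
    · exact .inl fun b hb => (h b hb).resolve_left fun hba => ham (hba ▸ hb)
  · rintro (h | ⟨m', hm', rfl⟩) b hb
    · exact .inr (h b hb)
    · rcases Sym.mem_cons.mp hb with rfl | hb
      · exact .inl rfl
      · exact hm' b hb

theorem disjoint_sym_image_cons {a : α} {s : Finset α} (ha : a ∉ s) {k : ℕ}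
    (t : Finset (Sym α k)) : Disjoint (s.sym (k + 1)) (t.image (Sym.cons a)) := by
  rw [disjoint_right]
  rintro _ hm hm'
  obtain ⟨m', -, rfl⟩ := mem_image.mp hm
  exact ha (mem_sym_iff.mp hm' a (Sym.mem_cons_self a m'))

theorem sum_sym_succ_insert {R : Type*} [CommSemiring R] (f : α → R) {a : α} {s : Finset α}
    (ha : a ∉ s) (k : ℕ) :
    ∑ m ∈ (insert a s).sym (k + 1), ((m : Multiset α).map f).prod =
      ∑ m ∈ s.sym (k + 1), ((m : Multiset α).map f).prod +
        f a * ∑ m ∈ (insert a s).sym k, ((m : Multiset α).map f).prod := by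
  rw [sym_succ_insert, sum_union (disjoint_sym_image_cons ha _),
    sum_image fun x _ y _ h => (Sym.cons_inj_right a x y).mp h, mul_sum]
  simp only [Sym.coe_cons, Multiset.map_cons, Multiset.prod_cons]

end Finset

open MvPolynomial

theorem Hp_succ_succ {n : ℕ} (a b : ℕ) (hb : b < n) :
    Hp n (a + 1) (b + 1) = Hp n (a + 1) b + X ⟨b, hb⟩ * Hp n a (b + 1) := by
  have hfilter : (Finset.univ.filter fun i : Fin n => (i : ℕ) < b + 1) =
      insert ⟨b, hb⟩ (Finset.univ.filter fun i : Fin n => (i : ℕ) < b) := by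
    ext i
    simp only [Finset.mem_filter, Finset.mem_univ, true_and, Finset.mem_insert, Fin.ext_iff]
    omega
  unfold Hp
  rw [hfilter]
  exact Finset.sum_sym_succ_insert _ (by simp) a

theorem Ideal.span_eq_of_succ_eq_add_mul {R : Type*} [CommRing R] (f g : ℕ → R) (x : R)
    (hfg : ∀ a, f (a + 1) = g (a + 1) + x * f a) {N : ℕ} (hN : 1 ≤ N) :
    Ideal.span {p | ∃ a, 1 ≤ a ∧ a ≤ N ∧ p = f a} =
      Ideal.span (insert (f 1) {p | ∃ a, 2 ≤ a ∧ a ≤ N ∧ p = g a}) := by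
  apply le_antisymm
  · rw [Ideal.span_le]
    rintro _ ⟨a, ha1, haN, rfl⟩
    induction a, ha1 using Nat.le_induction with
    | base => exact Ideal.subset_span (Set.mem_insert _ _)
    | succ a ha1 ih =>
      have hg : g (a + 1) ∈ insert (f 1) {p | ∃ a, 2 ≤ a ∧ a ≤ N ∧ p = g a} :=
        Set.mem_insert_of_mem _ ⟨a + 1, by omega, haN, rfl⟩
      rw [hfg a]
      exact Ideal.add_mem _ (Ideal.subset_span hg) (Ideal.mul_mem_left _ _ (ih (by omega)))
  · rw [Ideal.span_le]
    rintro _ (rfl | ⟨_ | c, ha2, haN, rfl⟩)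
    · exact Ideal.subset_span ⟨1, le_rfl, hN, rfl⟩
    · omega
    · rw [show g (c + 1) = f (c + 1) - x * f c by rw [hfg]; ring]
      exact Ideal.sub_mem _ (Ideal.subset_span ⟨c + 1, by omega, haN, rfl⟩)
        (Ideal.mul_mem_left _ _ (Ideal.subset_span ⟨c, by omega, by omega, rfl⟩))

theorem stmt6 (n : ℕ) (hn : 1 ≤ n) :
    Ideal.span { p : MvPolynomial (Fin n) ℤ | ∃ a, 1 ≤ a ∧ a ≤ n ∧ p = Hp n a n } =
      Ideal.span (insert (Hp n 1 n)
        { p : MvPolynomial (Fin n) ℤ | ∃ a, 2 ≤ a ∧ a ≤ n ∧ p = Hp n a (n - 1) }) := by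
  obtain ⟨m, rfl⟩ : ∃ m, n = m + 1 := ⟨n - 1, by omega⟩
  exact Ideal.span_eq_of_succ_eq_add_mul (fun a => Hp (m + 1) a (m + 1)) (fun a => Hp (m + 1) a m)
    (X ⟨m, m.lt_succ_self⟩) (fun a => Hp_succ_succ a m _) hn
end

section
/- For n ≥ 2, the quotient ring Z[x_1,...,x_n]/⟨h_1^n,...,h_n^n⟩ is isomorphic to Z[x_1,...,x_{n-1}]/⟨h_2^{n-1},...,h_n^{n-1}⟩, where h_a^b denotes the complete homogeneous symmetric polynomial of degree a in variables x_1,...,x_b; the isomorphism is induced by sending x_n to -(x_1+...+x_{n-1}). -/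
/-!
Splitting off the last variable gives `h_{a+1}^n = h_{a+1}^{n-1} + x_n h_a^n`, so the ideal
`⟨h_1^n, …, h_n^n⟩` is also generated by `h_2^{n-1}, …, h_n^{n-1}` together with
`h_1^n = x_n + (x_1 + ⋯ + x_{n-1})`. Killing the latter eliminates `x_n` exactly as `elimLast`
does, and the inclusion `ℤ[x_1, …, x_{n-1}] → ℤ[x_1, …, x_n]`, a section of `elimLast`,
induces the inverse isomorphism.
-/

open MvPolynomial Finset

/-- The ring homomorphism `ℤ[x_1,…,x_n] → ℤ[x_1,…,x_{n-1}]` fixing `x_1,…,x_{n-1}`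
and sending `x_n` to `-(x_1 + ⋯ + x_{n-1})`. -/
noncomputable def elimLast (n : ℕ) :
    MvPolynomial (Fin n) ℤ →+* MvPolynomial (Fin (n - 1)) ℤ :=
  MvPolynomial.eval₂Hom MvPolynomial.C fun i : Fin n =>
    if h : (i : ℕ) < n - 1 then MvPolynomial.X (⟨i, h⟩ : Fin (n - 1))
    else -(∑ j : Fin (n - 1), MvPolynomial.X j)

theorem Ideal.Quotient.lift_bijective_of_leftInverse {A B : Type*} [CommRing A] [CommRing B]
    {I : Ideal A} {J : Ideal B} (f : A →+* B) (g : B →+* A) (hfg : Function.LeftInverse f g)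
    (hgJ : J ≤ I.comap g) (hgf : ∀ a, g (f a) - a ∈ I)
    (hf : ∀ a ∈ I, (Ideal.Quotient.mk J).comp f a = 0) :
    Function.Bijective (Ideal.Quotient.lift I ((Ideal.Quotient.mk J).comp f) hf) := by
  refine ⟨(injective_iff_map_eq_zero _).2 fun x hx => ?_, fun y => ?_⟩
  · obtain ⟨a, rfl⟩ := Ideal.Quotient.mk_surjective x
    have hfa : f a ∈ J := Ideal.Quotient.eq_zero_iff_mem.1 hx
    rw [Ideal.Quotient.eq_zero_iff_mem, ← sub_sub_cancel (g (f a)) a]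
    exact I.sub_mem (hgJ hfa) (hgf a)
  · obtain ⟨b, rfl⟩ := Ideal.Quotient.mk_surjective y
    exact ⟨Ideal.Quotient.mk I (g b), by simp [hfg b]⟩

theorem Finset.sym_insert_succ {σ : Type*} [DecidableEq σ] {i : σ} {s : Finset σ} (hi : i ∉ s)
    (a : ℕ) :
    (insert i s).sym (a + 1) = s.sym (a + 1) ∪ ((insert i s).sym a).image (Sym.cons i) := by
  ext m
  simp only [mem_union, mem_image, mem_sym_iff, mem_insert]
  constructor
  · intro hm
    by_cases him : i ∈ m
    · obtain ⟨t, rfl⟩ := Sym.exists_cons_of_mem him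
      exact Or.inr ⟨t, fun x hx => hm x (Sym.mem_cons_of_mem hx), rfl⟩
    · exact Or.inl fun x hx => (hm x hx).resolve_left fun hxi => him (hxi ▸ hx)
  · rintro (hm | ⟨t, ht, rfl⟩) x hx
    · exact Or.inr (hm x hx)
    · rcases Sym.mem_cons.1 hx with rfl | hx
      · exact Or.inl rfl
      · exact ht x hx

namespace MvPolynomial

variable {σ τ : Type*} (R : Type*) [CommSemiring R] [DecidableEq σ] [DecidableEq τ]

noncomputable def hsymmOn (s : Finset σ) (a : ℕ) : MvPolynomial σ R :=
  ∑ m ∈ s.sym a, (m.1.map X).prod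

theorem hsymmOn_univ [Fintype σ] (a : ℕ) : hsymmOn R (univ : Finset σ) a = hsymm σ R a := by
  rw [hsymmOn, sym_univ, hsymm]

theorem rename_hsymmOn (f : σ ↪ τ) (s : Finset σ) (a : ℕ) :
    rename f (hsymmOn R s a) = hsymmOn R (s.map f) a := by
  simp [hsymmOn, sym_map, map_sum, map_multiset_prod, Multiset.map_map]

theorem hsymmOn_insert_succ {i : σ} {s : Finset σ} (hi : i ∉ s) (a : ℕ) :
    hsymmOn R (insert i s) (a + 1) = hsymmOn R s (a + 1) + X i * hsymmOn R (insert i s) a := by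
  have hdisj : Disjoint (s.sym (a + 1)) (((insert i s).sym a).image (Sym.cons i)) := by
    rw [disjoint_right]
    rintro _ hm hm'
    obtain ⟨m, -, rfl⟩ := mem_image.1 hm
    exact hi (mem_sym_iff.1 hm' i (Sym.mem_cons_self i m))
  rw [hsymmOn, sym_insert_succ hi, sum_union hdisj,
    sum_image fun x _ y _ h => (Sym.cons_inj_right i x y).1 h, hsymmOn, hsymmOn, mul_sum]
  simp [Sym.coe_cons]

end MvPolynomial

noncomputable def hsymmIdeal (m lo hi : ℕ) : Ideal (MvPolynomial (Fin m) ℤ) :=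
  Ideal.span {p | ∃ a, lo ≤ a ∧ a ≤ hi ∧ p = Hp m a m}

theorem Hp_mem_hsymmIdeal {m lo hi a : ℕ} (ha : lo ≤ a) (ha' : a ≤ hi) :
    Hp m a m ∈ hsymmIdeal m lo hi :=
  Ideal.subset_span ⟨a, ha, ha', rfl⟩

theorem Hp_eq_hsymmOn (n a b : ℕ) :
    Hp n a b = hsymmOn ℤ (univ.filter fun i : Fin n => (i : ℕ) < b) a :=
  rfl

theorem Hp_self (n a : ℕ) : Hp n a n = hsymm (Fin n) ℤ a := by
  rw [Hp_eq_hsymmOn, filter_true_of_mem fun i _ => i.isLt, hsymmOn_univ]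

section

variable {n : ℕ}

theorem rename_castLE_Hp (a : ℕ) :
    rename (Fin.castLE (Nat.sub_le n 1)) (Hp (n - 1) a (n - 1)) = Hp n a (n - 1) := by
  rw [Hp_self, ← hsymmOn_univ, ← Fin.coe_castLEEmb, rename_hsymmOn, Hp_eq_hsymmOn]
  congr 1
  ext i
  simp only [mem_map, mem_univ, true_and, Fin.coe_castLEEmb, mem_filter]
  exact ⟨by rintro ⟨j, rfl⟩; exact j.isLt, fun hi => ⟨⟨i, hi⟩, rfl⟩⟩

theorem Hp_succ (hn : 0 < n) (a : ℕ) :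
    Hp n (a + 1) n = Hp n (a + 1) (n - 1) + X ⟨n - 1, by omega⟩ * Hp n a n := by
  have hsplit : (univ.filter fun i : Fin n => (i : ℕ) < n) =
      insert ⟨n - 1, by omega⟩ (univ.filter fun i : Fin n => (i : ℕ) < n - 1) := by
    ext i
    simp only [mem_filter, mem_univ, true_and, mem_insert, Fin.ext_iff]
    omega
  simp only [Hp_eq_hsymmOn, hsplit]
  exact hsymmOn_insert_succ ℤ (by simp) a

theorem elimLast_rename_castLE (p : MvPolynomial (Fin (n - 1)) ℤ) :
    elimLast n (rename (Fin.castLE (Nat.sub_le n 1)) p) = p := by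
  simp only [elimLast, coe_eval₂Hom, eval₂_rename]
  convert eval₂_eta p using 2
  funext i
  simp

theorem elimLast_X_last (hn : 0 < n) : elimLast n (X ⟨n - 1, by omega⟩) = -∑ j, X j := by
  simp [elimLast]

theorem elimLast_Hp_succ (hn : 0 < n) (a : ℕ) :
    elimLast n (Hp n (a + 1) n) =
      Hp (n - 1) (a + 1) (n - 1) - (∑ j, X j) * elimLast n (Hp n a n) := by
  rw [Hp_succ hn, map_add, map_mul, ← rename_castLE_Hp, elimLast_rename_castLE,
    elimLast_X_last hn]
  ring

theorem elimLast_Hp_one (hn : 0 < n) : elimLast n (Hp n 1 n) = 0 := by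
  rw [elimLast_Hp_succ hn, Hp_self, Hp_self, hsymm_zero, hsymm_one, map_one, mul_one, sub_self]

theorem elimLast_Hp_mem (hn : 0 < n) {a : ℕ} (ha : 1 ≤ a) (ha' : a ≤ n) :
    elimLast n (Hp n a n) ∈ hsymmIdeal (n - 1) 2 n := by
  induction a, ha using Nat.le_induction with
  | base => rw [elimLast_Hp_one hn]; exact zero_mem _
  | succ a ha ih =>
    rw [elimLast_Hp_succ hn]
    exact sub_mem (Hp_mem_hsymmIdeal (by omega) ha') (Ideal.mul_mem_left _ _ (ih (by omega)))

theorem hsymmIdeal_le_comap_elimLast (hn : 0 < n) :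
    hsymmIdeal n 1 n ≤ (hsymmIdeal (n - 1) 2 n).comap (elimLast n) := by
  rw [hsymmIdeal, Ideal.span_le]
  rintro _ ⟨a, ha, ha', rfl⟩
  exact elimLast_Hp_mem hn ha ha'

theorem hsymmIdeal_le_comap_rename_castLE (hn : 0 < n) :
    hsymmIdeal (n - 1) 2 n ≤
      (hsymmIdeal n 1 n).comap (rename (Fin.castLE (Nat.sub_le n 1))).toRingHom := by
  rw [hsymmIdeal, Ideal.span_le]
  rintro _ ⟨a, ha, ha', rfl⟩
  obtain ⟨a, rfl⟩ : ∃ b, a = b + 1 := ⟨a - 1, by omega⟩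
  rw [SetLike.mem_coe, Ideal.mem_comap, AlgHom.toRingHom_eq_coe, RingHom.coe_coe,
    rename_castLE_Hp, eq_sub_of_add_eq (Hp_succ hn a).symm]
  exact sub_mem (Hp_mem_hsymmIdeal (by omega) ha')
    (Ideal.mul_mem_left _ _ (Hp_mem_hsymmIdeal (by omega) (by omega)))

theorem rename_castLE_elimLast_sub_mem (hn : 0 < n) (p : MvPolynomial (Fin n) ℤ) :
    rename (Fin.castLE (Nat.sub_le n 1)) (elimLast n p) - p ∈ hsymmIdeal n 1 n := by
  suffices h : (Ideal.Quotient.mk (hsymmIdeal n 1 n)).comp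
      ((rename (Fin.castLE (Nat.sub_le n 1))).toRingHom.comp (elimLast n)) =
      Ideal.Quotient.mk _ from
    Ideal.Quotient.eq.1 (RingHom.congr_fun h p)
  refine ringHom_ext (fun r => by simp [elimLast]) fun i => ?_
  by_cases hi : (i : ℕ) < n - 1
  · simp [elimLast, hi]
  -- for `x_n` the two sides differ by `-h_1^n = -(x_1 + ⋯ + x_n)`
  rw [show i = ⟨n - 1, by omega⟩ from Fin.ext (by simp; omega), RingHom.comp_apply,
    RingHom.comp_apply, elimLast_X_last hn, map_neg, ← hsymm_one, ← Hp_self,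
    AlgHom.toRingHom_eq_coe, RingHom.coe_coe, rename_castLE_Hp, Ideal.Quotient.eq]
  have h1 : Hp n 1 n = Hp n 1 (n - 1) + X ⟨n - 1, by omega⟩ := by
    rw [Hp_succ hn, Hp_self n 0, hsymm_zero, mul_one]
  rw [← neg_add', ← h1]
  exact neg_mem (Hp_mem_hsymmIdeal le_rfl hn)

end

theorem stmt8 (n : ℕ) (hn : 2 ≤ n) :
    ∃ h : ∀ p ∈ Ideal.span { p : MvPolynomial (Fin n) ℤ | ∃ a, 1 ≤ a ∧ a ≤ n ∧ p = Hp n a n },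
        ((Ideal.Quotient.mk (Ideal.span
          { q : MvPolynomial (Fin (n - 1)) ℤ | ∃ a, 2 ≤ a ∧ a ≤ n ∧ q = Hp (n - 1) a (n - 1) })).comp
          (elimLast n)) p = 0,
      Function.Bijective (Ideal.Quotient.lift
        (Ideal.span { p : MvPolynomial (Fin n) ℤ | ∃ a, 1 ≤ a ∧ a ≤ n ∧ p = Hp n a n })
        ((Ideal.Quotient.mk (Ideal.span
          { q : MvPolynomial (Fin (n - 1)) ℤ | ∃ a, 2 ≤ a ∧ a ≤ n ∧ q = Hp (n - 1) a (n - 1) })).comp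
          (elimLast n)) h) := by
  have hpos : 0 < n := by omega
  exact ⟨fun p hp => Ideal.Quotient.eq_zero_iff_mem.2 (hsymmIdeal_le_comap_elimLast hpos hp),
    Ideal.Quotient.lift_bijective_of_leftInverse (elimLast n)
      (rename (Fin.castLE (Nat.sub_le n 1))).toRingHom elimLast_rename_castLE
      (hsymmIdeal_le_comap_rename_castLE hpos) (rename_castLE_elimLast_sub_mem hpos) _⟩
end
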